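/- arXiv:2208.10278 — 6 statements merged into one kernel-verified Lean document; each statement's English description precedes it below -/
import Mathlib

section
/- Let p ≥ 1, let v, v' ∈ ℝ^p with ‖v − v'‖₂ ≤ Δ for some Δ > 0, and let δ ∈ (0,1), ε ∈ (0,1), and c > 0 with c² > 2·ln(1.25/δ). Set σ = c·Δ/ε. Let μ be the law of v + Z and ν the law of v' + Z, where Z is a random vector in ℝ^p with p independent coordinates each distributed N(0, σ²) (i.e., μ and ν are the p-fold product of one-dimensional Gaussians N(0,σ²) translated by v and v' respectively). Then μ and ν are (ε, δ)-indistinguishable: for every measurable set S ⊆ ℝ^p, μ(S) ≤ e^ε·ν(S) + δ. (This is the (ε,δ)-differential privacy guarantee of the Gaussian mechanism M(D) = f(D) + N(0, σ²I) for a function f of ℓ₂-sensitivity Δ, stated for an arbitrary pair of neighboring inputs.) -/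
/-! The density of `μ = N(v, σ²I)` with respect to `ν = N(v', σ²I)` is `exp L`, where the privacy
loss `L x = (‖x - v'‖² - ‖x - v‖²) / (2σ²)` is affine in `x`; hence `μ S ≤ e^ε ν S + μ {L > ε}`.
Under `μ`, `L` is a sum of independent one-dimensional Gaussians, so its law is `N(m, 2m)` with
`m = ‖v - v'‖² / (2σ²) ≤ ε² / (2c²)`. If `m ≤ ε`, the tail bound
`P(X > 𝔼X + a) ≤ ½ exp(-a² / (2 Var X))` (tilt the mean to the threshold, then use symmetry) gives
`μ {L > ε} ≤ ½ e^{1/2} e^{-c²/2} < δ`. If `ε < m`, the hypotheses force `c² < 1/2`, hence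
`δ > 0.93`, while `μ {L > ε} ≤ ½ + (m - ε) · sup pdf < 5/6`. -/

open MeasureTheory ProbabilityTheory Real Set
open scoped ENNReal NNReal

theorem MeasureTheory.Measure.pi_withDensity {ι : Type*} [Fintype ι] {α : ι → Type*}
    [∀ i, MeasurableSpace (α i)] (μ : ∀ i, Measure (α i)) [∀ i, IsProbabilityMeasure (μ i)]
    {f : ∀ i, α i → ℝ≥0∞} (hf : ∀ i, Measurable (f i)) (hf_top : ∀ i x, f i x ≠ ∞) :
    Measure.pi (fun i ↦ (μ i).withDensity (f i)) =
      (Measure.pi μ).withDensity (fun x ↦ ∏ i, f i (x i)) := by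
  have (i : ι) : SigmaFinite ((μ i).withDensity (f i)) := .withDensity_of_ne_top' (hf_top i)
  refine Measure.pi_eq fun s hs ↦ ?_
  have h_ind : (univ.pi s).indicator (fun x ↦ ∏ i, f i (x i)) =
      fun x ↦ ∏ i, (s i).indicator (f i) (x i) := by
    ext x
    by_cases hx : x ∈ univ.pi s
    · simp_all [indicator_of_mem]
    · obtain ⟨i, -, hi⟩ := not_forall₂.mp hx
      rw [indicator_of_notMem hx, Finset.prod_eq_zero (Finset.mem_univ i)
        (indicator_of_notMem hi _)]
  have h_meas i : Measurable ((s i).indicator (f i)) := (hf i).indicator (hs i)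
  rw [withDensity_apply _ (.univ_pi hs), ← lintegral_indicator (.univ_pi hs), h_ind,
    lintegral_prod_eq_prod_lintegral_of_indepFun _ _
      (iIndepFun_pi fun i ↦ (h_meas i).aemeasurable) fun i ↦ (h_meas i).comp (measurable_pi_apply i)]
  refine Finset.prod_congr rfl fun i _ ↦ ?_
  rw [(measurePreserving_eval μ i).lintegral_comp (h_meas i), lintegral_indicator (hs i),
    withDensity_apply _ (hs i)]

theorem MeasureTheory.Measure.le_exp_mul_add_of_eq_withDensity {α : Type*} [MeasurableSpace α]
    {μ ν : Measure α} {L : α → ℝ} (hL : Measurable L)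
    (hμν : μ = ν.withDensity fun x ↦ ENNReal.ofReal (exp (L x))) (ε : ℝ) {S : Set α}
    (hS : MeasurableSet S) :
    μ S ≤ ENNReal.ofReal (exp ε) * ν S + μ.map L (Ioi ε) := by
  have h_le : MeasurableSet {x | L x ≤ ε} := measurableSet_le hL measurable_const
  have h_body : μ (S ∩ {x | L x ≤ ε}) ≤ ENNReal.ofReal (exp ε) * ν S := by
    rw [hμν, withDensity_apply _ (hS.inter h_le)]
    calc ∫⁻ x in S ∩ {x | L x ≤ ε}, ENNReal.ofReal (exp (L x)) ∂ν
        ≤ ∫⁻ _ in S ∩ {x | L x ≤ ε}, ENNReal.ofReal (exp ε) ∂ν :=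
          setLIntegral_mono' (hS.inter h_le) fun x hx ↦ by gcongr; exact hx.2
      _ ≤ ENNReal.ofReal (exp ε) * ν S := by
          rw [setLIntegral_const]
          gcongr
          exact inter_subset_left
  rw [Measure.map_apply hL measurableSet_Ioi]
  calc μ S ≤ μ (S ∩ {x | L x ≤ ε}) + μ (L ⁻¹' Ioi ε) := by
        refine (measure_mono fun x hx ↦ ?_).trans (measure_union_le _ _)
        rcases le_or_gt (L x) ε with h | h
        exacts [Or.inl ⟨hx, h⟩, Or.inr h]
    _ ≤ ENNReal.ofReal (exp ε) * ν S + μ (L ⁻¹' Ioi ε) := by gcongr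

namespace ProbabilityTheory

theorem iIndepFun.map_sum_eq_gaussianReal {Ω ι : Type*} [MeasurableSpace Ω]
    {P : Measure Ω} {X : ι → Ω → ℝ} (hX : iIndepFun X P) (h_meas : ∀ i, Measurable (X i))
    {m : ι → ℝ} {v : ι → ℝ≥0} (h_law : ∀ i, P.map (X i) = gaussianReal (m i) (v i))
    (s : Finset ι) :
    P.map (∑ i ∈ s, X i) = gaussianReal (∑ i ∈ s, m i) (∑ i ∈ s, v i) := by
  have := hX.isProbabilityMeasure
  induction s using Finset.cons_induction with
  | empty =>
    simp only [Finset.sum_empty, gaussianReal_zero_var]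
    exact (Measure.map_const P 0).trans (by simp)
  | cons j s hj ih =>
    simp only [Finset.sum_cons]
    exact gaussianReal_add_gaussianReal_of_indepFun
      (hX.indepFun_finsetSum_of_notMem h_meas hj).symm (h_law j) ih

section OneDimensional

variable {μ : ℝ} {v : ℝ≥0}

theorem gaussianReal_eq_withDensity_gaussianReal (μ μ' : ℝ) (hv : v ≠ 0) :
    gaussianReal μ v = (gaussianReal μ' v).withDensity
      fun x ↦ ENNReal.ofReal (exp (((x - μ') ^ 2 - (x - μ) ^ 2) / (2 * v))) := by
  have h_meas : Measurable fun x ↦ ENNReal.ofReal (exp (((x - μ') ^ 2 - (x - μ) ^ 2) / (2 * v))) := by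
    fun_prop
  rw [gaussianReal_of_var_ne_zero μ hv, gaussianReal_of_var_ne_zero μ' hv,
    ← withDensity_mul _ (measurable_gaussianPDF μ' v) h_meas]
  congr 1 with x
  rw [Pi.mul_apply, gaussianPDF, gaussianPDF, ← ENNReal.ofReal_mul (gaussianPDFReal_nonneg _ _ _),
    gaussianPDFReal, gaussianPDFReal, mul_assoc _ (exp _), ← exp_add]
  congr 3
  ring

theorem gaussianReal_map_sq_sub_sq (μ μ' : ℝ) (hv : v ≠ 0) :
    (gaussianReal μ v).map (fun x ↦ ((x - μ') ^ 2 - (x - μ) ^ 2) / (2 * v)) =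
      gaussianReal ((μ - μ') ^ 2 / (2 * v)) ((μ - μ') ^ 2 / v).toNNReal := by
  have hv' : (v : ℝ) ≠ 0 := by positivity
  have h_affine : (fun x ↦ ((x - μ') ^ 2 - (x - μ) ^ 2) / (2 * v)) =
      (· + (μ' ^ 2 - μ ^ 2) / (2 * v)) ∘ (((μ - μ') / v) * ·) := by
    ext x
    simp only [Function.comp_apply]
    field_simp
    ring
  rw [h_affine, ← Measure.map_map (by fun_prop) (by fun_prop), gaussianReal_map_const_mul,
    gaussianReal_map_add_const]
  congr 1
  · field_simp
    ring
  · ext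
    rw [NNReal.coe_mul, NNReal.coe_mk, Real.coe_toNNReal _ (by positivity)]
    field_simp

theorem gaussianReal_Ioi_self_le : gaussianReal μ v (Ioi μ) ≤ 2⁻¹ := by
  have h_refl : (gaussianReal μ v).map (2 * μ - ·) = gaussianReal μ v := by
    rw [gaussianReal_map_const_sub]
    ring_nf
  have h_symm : gaussianReal μ v (Iio μ) = gaussianReal μ v (Ioi μ) := by
    conv_lhs => rw [← h_refl, Measure.map_apply (by fun_prop) measurableSet_Iio]
    congr 1 with x
    simp only [mem_preimage, mem_Iio, mem_Ioi]
    constructor <;> intro <;> linarith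
  have h_sum : gaussianReal μ v (Ioi μ) + gaussianReal μ v (Iio μ) ≤ 1 := by
    rw [← measure_union Ioi_disjoint_Iio_same measurableSet_Iio]
    exact prob_le_one
  rw [h_symm, ← two_mul] at h_sum
  rwa [ENNReal.le_inv_iff_mul_le, mul_comm]

theorem gaussianReal_Ioi_add_le (hv : v ≠ 0) {a : ℝ} (ha : 0 ≤ a) :
    gaussianReal μ v (Ioi (μ + a)) ≤ 2⁻¹ * ENNReal.ofReal (exp (-a ^ 2 / (2 * v))) := by
  have hv' : (0 : ℝ) < v := by positivity
  rw [gaussianReal_eq_withDensity_gaussianReal μ (μ + a) hv, withDensity_apply _ measurableSet_Ioi]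
  calc ∫⁻ x in Ioi (μ + a), ENNReal.ofReal (exp (((x - (μ + a)) ^ 2 - (x - μ) ^ 2) / (2 * v)))
        ∂gaussianReal (μ + a) v
      ≤ ∫⁻ _ in Ioi (μ + a), ENNReal.ofReal (exp (-a ^ 2 / (2 * v))) ∂gaussianReal (μ + a) v := by
        refine setLIntegral_mono' measurableSet_Ioi fun x hx ↦ ?_
        gcongr
        nlinarith [mem_Ioi.mp hx]
    _ = ENNReal.ofReal (exp (-a ^ 2 / (2 * v))) * gaussianReal (μ + a) v (Ioi (μ + a)) :=
        setLIntegral_const _ _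
    _ ≤ 2⁻¹ * ENNReal.ofReal (exp (-a ^ 2 / (2 * v))) := by
        rw [mul_comm]
        gcongr
        exact gaussianReal_Ioi_self_le

theorem gaussianReal_Ioc_le (hv : v ≠ 0) (a b : ℝ) :
    gaussianReal μ v (Ioc a b) ≤ ENNReal.ofReal ((b - a) / √(2 * π * v)) := by
  rw [gaussianReal_apply μ hv]
  calc ∫⁻ x in Ioc a b, gaussianPDF μ v x
      ≤ ∫⁻ _ in Ioc a b, ENNReal.ofReal (√(2 * π * v))⁻¹ := by
        refine setLIntegral_mono' measurableSet_Ioc fun x _ ↦ ?_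
        rw [gaussianPDF]
        gcongr
        refine mul_le_of_le_one_right (by positivity) (exp_le_one_iff.mpr ?_)
        exact div_nonpos_of_nonpos_of_nonneg (neg_nonpos.mpr (sq_nonneg _)) (by positivity)
    _ = ENNReal.ofReal ((b - a) / √(2 * π * v)) := by
        rw [setLIntegral_const, Real.volume_Ioc, ← ENNReal.ofReal_mul (by positivity),
          div_eq_mul_inv, mul_comm]

theorem gaussianReal_Ioi_le_half_add (hv : v ≠ 0) (a : ℝ) :
    gaussianReal μ v (Ioi a) ≤ 2⁻¹ + ENNReal.ofReal ((μ - a) / √(2 * π * v)) := by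
  calc gaussianReal μ v (Ioi a) ≤ gaussianReal μ v (Ioi μ ∪ Ioc a μ) := by
        refine measure_mono fun x hx ↦ ?_
        rcases lt_or_ge μ x with h | h
        exacts [Or.inl h, Or.inr ⟨hx, h⟩]
    _ ≤ gaussianReal μ v (Ioi μ) + gaussianReal μ v (Ioc a μ) := measure_union_le _ _
    _ ≤ 2⁻¹ + ENNReal.ofReal ((μ - a) / √(2 * π * v)) :=
        add_le_add gaussianReal_Ioi_self_le (gaussianReal_Ioc_le hv a μ)

end OneDimensional

section PrivacyLossTail

variable {m ε δ c : ℝ}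

theorem gaussianReal_two_mul_Ioi_le_of_le (hm : 0 < m) (hmε : m ≤ ε) (hε : ε ≤ 1)
    (hmc : 2 * c ^ 2 * m ≤ ε ^ 2) (hδ : 1.25 * exp (-(c ^ 2 / 2)) < δ) :
    gaussianReal m (2 * m).toNNReal (Ioi ε) ≤ ENNReal.ofReal δ := by
  have hv : ((2 * m).toNNReal : ℝ) = 2 * m := Real.coe_toNNReal _ (by positivity)
  have h_exponent : -(ε - m) ^ 2 / (2 * (2 * m)) ≤ 1 / 2 + -(c ^ 2 / 2) := by
    rw [div_le_iff₀' (by positivity)]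
    nlinarith
  have h_exp_half : exp (1 / 2) < 2.5 := by
    have h : exp (1 / 2) * exp (1 / 2) = exp 1 := by rw [← exp_add]; norm_num
    nlinarith [exp_pos (1 / 2), exp_one_lt_d9]
  calc gaussianReal m (2 * m).toNNReal (Ioi ε)
        = gaussianReal m (2 * m).toNNReal (Ioi (m + (ε - m))) := by rw [add_sub_cancel]
    _ ≤ 2⁻¹ * ENNReal.ofReal (exp (-(ε - m) ^ 2 / (2 * (2 * m).toNNReal))) :=
        gaussianReal_Ioi_add_le (by simpa using hm) (sub_nonneg.2 hmε)
    _ ≤ ENNReal.ofReal δ := by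
        rw [← ENNReal.ofReal_ofNat 2, ← ENNReal.ofReal_inv_of_pos two_pos,
          ← ENNReal.ofReal_mul (by norm_num), hv]
        refine ENNReal.ofReal_le_ofReal ?_
        calc 2⁻¹ * exp (-(ε - m) ^ 2 / (2 * (2 * m)))
            ≤ 2⁻¹ * (exp (1 / 2) * exp (-(c ^ 2 / 2))) := by rw [← exp_add]; gcongr
          _ ≤ δ := by nlinarith [exp_pos (-(c ^ 2 / 2))]

theorem gaussianReal_two_mul_Ioi_le_of_lt (hεm : ε < m) (hε : ε ∈ Ioo 0 1)
    (hmc : 2 * c ^ 2 * m ≤ ε ^ 2) (hδ : 1.25 * exp (-(c ^ 2 / 2)) < δ) (hδ1 : δ < 1) :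
    gaussianReal m (2 * m).toNNReal (Ioi ε) ≤ ENNReal.ofReal δ := by
  have hm : 0 < m := hε.1.trans hεm
  have hv : ((2 * m).toNNReal : ℝ) = 2 * m := Real.coe_toNNReal _ (by positivity)
  have hc_small : 2 * c ^ 2 < ε := by nlinarith [hε.1]
  have hc_large : 0.4 < c ^ 2 := by
    have : exp (-(c ^ 2 / 2)) < exp (-0.2) := by
      nlinarith [add_one_le_exp (-0.2 : ℝ)]
    linarith [exp_lt_exp.mp this]
  have hm_le : m ≤ 1.25 := by nlinarith [mul_lt_mul_of_pos_right hc_large hm, hε.1, hε.2]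
  have hδ_large : 0.9375 < δ := calc
      (0.9375 : ℝ) = 1.25 * (-(1 / 4) + 1) := by norm_num
      _ ≤ 1.25 * exp (-(1 / 4)) := by gcongr; exact add_one_le_exp _
      _ ≤ 1.25 * exp (-(c ^ 2 / 2)) := by gcongr 1.25 * exp ?_; linarith [hε.2]
      _ < δ := hδ
  have h_interval : (m - ε) / √(2 * π * (2 * m)) ≤ 1 / 3 := by
    have h_sqrt : 3 * (m - ε) ≤ √(2 * π * (2 * m)) := by
      rw [le_sqrt (by linarith) (by positivity)]
      nlinarith [pi_gt_three, hε.1]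
    rw [div_le_iff₀ (by positivity)]
    linarith
  calc gaussianReal m (2 * m).toNNReal (Ioi ε)
      ≤ 2⁻¹ + ENNReal.ofReal ((m - ε) / √(2 * π * (2 * m).toNNReal)) :=
        gaussianReal_Ioi_le_half_add (by simpa using hm) ε
    _ ≤ ENNReal.ofReal δ := by
        rw [← ENNReal.ofReal_ofNat 2, ← ENNReal.ofReal_inv_of_pos two_pos,
          ← ENNReal.ofReal_add (by norm_num) (by rw [hv]; positivity), hv]
        exact ENNReal.ofReal_le_ofReal (by linarith)

theorem gaussianReal_two_mul_Ioi_le (hm : 0 ≤ m) (hmc : 2 * c ^ 2 * m ≤ ε ^ 2)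
    (hε : ε ∈ Ioo 0 1) (hδ : δ ∈ Ioo 0 1) (hc : 2 * log (1.25 / δ) < c ^ 2) :
    gaussianReal m (2 * m).toNNReal (Ioi ε) ≤ ENNReal.ofReal δ := by
  have hδc : 1.25 * exp (-(c ^ 2 / 2)) < δ := by
    have : 1.25 / δ < exp (c ^ 2 / 2) := by
      rw [← exp_log (div_pos (by norm_num) hδ.1)]
      exact exp_lt_exp.mpr (by linarith)
    rw [exp_neg, ← div_eq_mul_inv, div_lt_iff₀ (exp_pos _)]
    rwa [div_lt_iff₀ hδ.1, mul_comm] at this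
  rcases hm.eq_or_lt with rfl | hm
  · simp [indicator_of_notMem (show (0 : ℝ) ∉ Ioi ε from fun h ↦ lt_asymm h hε.1)]
  rcases le_or_gt m ε with hmε | hεm
  · exact gaussianReal_two_mul_Ioi_le_of_le hm hmε hε.2.le hmc hδc
  · exact gaussianReal_two_mul_Ioi_le_of_lt hεm hε hmc hδc hδ.2

end PrivacyLossTail

section PrivacyLoss

variable {ι : Type*} [Fintype ι] {v : ℝ≥0}

noncomputable def gaussianPrivacyLoss (v : ℝ≥0) (a b x : ι → ℝ) : ℝ :=
  ∑ i, ((x i - b i) ^ 2 - (x i - a i) ^ 2) / (2 * v)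

theorem measurable_gaussianPrivacyLoss (v : ℝ≥0) (a b : ι → ℝ) :
    Measurable (gaussianPrivacyLoss v a b) := by
  unfold gaussianPrivacyLoss
  fun_prop

theorem pi_gaussianReal_eq_withDensity (a b : ι → ℝ) (hv : v ≠ 0) :
    Measure.pi (fun i ↦ gaussianReal (a i) v) =
      (Measure.pi fun i ↦ gaussianReal (b i) v).withDensity
        fun x ↦ ENNReal.ofReal (exp (gaussianPrivacyLoss v a b x)) := by
  conv_lhs => enter [1, i]; rw [gaussianReal_eq_withDensity_gaussianReal (a i) (b i) hv]
  rw [Measure.pi_withDensity _ (fun i ↦ by fun_prop) (fun i x ↦ ENNReal.ofReal_ne_top)]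
  congr 1 with x
  rw [gaussianPrivacyLoss, exp_sum, ENNReal.ofReal_prod_of_nonneg fun i _ ↦ (exp_pos _).le]

theorem map_pi_gaussianReal_gaussianPrivacyLoss (a b : ι → ℝ) (hv : v ≠ 0) :
    (Measure.pi fun i ↦ gaussianReal (a i) v).map (gaussianPrivacyLoss v a b) =
      gaussianReal ((∑ i, (a i - b i) ^ 2) / (2 * v))
        (2 * ((∑ i, (a i - b i) ^ 2) / (2 * v))).toNNReal := by
  have h_law i : (Measure.pi fun i ↦ gaussianReal (a i) v).map
      (fun x ↦ ((x i - b i) ^ 2 - (x i - a i) ^ 2) / (2 * v)) =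
      gaussianReal ((a i - b i) ^ 2 / (2 * v)) ((a i - b i) ^ 2 / v).toNNReal := by
    rw [← gaussianReal_map_sq_sub_sq _ _ hv,
      ← (measurePreserving_eval (fun i ↦ gaussianReal (a i) v) i).map_eq,
      Measure.map_map (g := fun x ↦ ((x - b i) ^ 2 - (x - a i) ^ 2) / (2 * v)) (by fun_prop)
        (measurable_pi_apply i)]
    rfl
  have h_sum := (iIndepFun_pi (X := fun i (t : ℝ) ↦ ((t - b i) ^ 2 - (t - a i) ^ 2) / (2 * v))
    fun i ↦ by fun_prop).map_sum_eq_gaussianReal (fun i ↦ by fun_prop) h_law Finset.univ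
  convert h_sum using 2
  · ext x
    simp [gaussianPrivacyLoss]
  · rw [Finset.sum_div]
  · rw [← Real.toNNReal_sum_of_nonneg fun i _ ↦ by positivity]
    congr 1
    rw [Finset.sum_div, Finset.mul_sum]
    congr 1 with i
    field_simp

end PrivacyLoss

end ProbabilityTheory

theorem gaussian_mechanism_dp_general
    (p : ℕ) (v v' : Fin p → ℝ) (Δ : ℝ) (hΔ : 0 < Δ)
    (hsens : Real.sqrt (∑ i, (v i - v' i) ^ 2) ≤ Δ)
    (δ ε c : ℝ) (hδ : δ ∈ Set.Ioo (0 : ℝ) 1) (hε : ε ∈ Set.Ioo (0 : ℝ) 1)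
    (hc : 0 < c) (hc2 : 2 * Real.log (1.25 / δ) < c ^ 2)
    (σ : ℝ) (hσ : σ = c * Δ / ε) :
    ∀ S : Set (Fin p → ℝ), MeasurableSet S →
      (Measure.pi fun i => gaussianReal (v i) ((σ ^ 2).toNNReal)) S ≤
        ENNReal.ofReal (Real.exp ε) *
            (Measure.pi fun i => gaussianReal (v' i) ((σ ^ 2).toNNReal)) S
          + ENNReal.ofReal δ := by
  intro S hS
  have hσ_pos : 0 < σ := by rw [hσ]; exact div_pos (mul_pos hc hΔ) hε.1
  have hv : (σ ^ 2).toNNReal ≠ 0 := by simpa using hσ_pos.ne'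
  have hv' : ((σ ^ 2).toNNReal : ℝ) = σ ^ 2 := Real.coe_toNNReal _ (sq_nonneg σ)
  refine (Measure.le_exp_mul_add_of_eq_withDensity (measurable_gaussianPrivacyLoss _ v v')
    (pi_gaussianReal_eq_withDensity v v' hv) ε hS).trans (add_le_add_right ?_ _)
  rw [map_pi_gaussianReal_gaussianPrivacyLoss v v' hv]
  refine gaussianReal_two_mul_Ioi_le (by positivity) ?_ hε hδ hc2
  have h_dist : ∑ i, (v i - v' i) ^ 2 ≤ Δ ^ 2 := (Real.sqrt_le_iff.mp hsens).2
  rw [hv', hσ]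
  field_simp
  nlinarith

/-- (ε,δ)-differential privacy of the Gaussian mechanism: if `‖v - v'‖₂ ≤ Δ`,
`δ, ε ∈ (0,1)`, `c > 0` with `c² > 2 ln(1.25/δ)` and `σ = cΔ/ε`, then the laws of
`v + Z` and `v' + Z` (with `Z` having `p` independent `N(0,σ²)` coordinates) are
(ε,δ)-indistinguishable. -/
theorem gaussian_mechanism_dp
    (p : ℕ) (hp : 1 ≤ p) (v v' : Fin p → ℝ) (Δ : ℝ) (hΔ : 0 < Δ)
    (hsens : Real.sqrt (∑ i, (v i - v' i) ^ 2) ≤ Δ)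
    (δ ε c : ℝ) (hδ : δ ∈ Set.Ioo (0 : ℝ) 1) (hε : ε ∈ Set.Ioo (0 : ℝ) 1)
    (hc : 0 < c) (hc2 : 2 * Real.log (1.25 / δ) < c ^ 2)
    (σ : ℝ) (hσ : σ = c * Δ / ε) :
    ∀ S : Set (Fin p → ℝ), MeasurableSet S →
      (Measure.pi fun i => gaussianReal (v i) ((σ ^ 2).toNNReal)) S ≤
        ENNReal.ofReal (Real.exp ε) *
            (Measure.pi fun i => gaussianReal (v' i) ((σ ^ 2).toNNReal)) S
          + ENNReal.ofReal δ :=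
  gaussian_mechanism_dp_general p v v' Δ hΔ hsens δ ε c hδ hε hc hc2 σ hσ
end

section
/- (Tail bound converting moments to (ε, δ)-differential privacy.) Let μ and ν be probability measures on a measurable space with μ absolutely continuous with respect to ν, and let dμ/dν denote the Radon–Nikodym derivative. Then for every real λ > 0, every real ε > 0, and every measurable set S, μ(S) ≤ e^ε·ν(S) + e^{−λε}·∫ (dμ/dν)^λ dμ (the integral taken in [0,∞]). In particular, if the λ-th moment α(λ) = log ∫ (dμ/dν)^λ dμ is finite, then μ and ν are (ε, δ)-indistinguishable with δ = exp(α(λ) − λε), and hence with δ = inf_{λ>0} exp(α(λ) − λε). -/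
open MeasureTheory

/-!
On `{dμ/dν < e^ε}` the measure `μ` is at most `e^ε ν`, and the remaining set `{e^ε ≤ dμ/dν}` has
`μ`-measure at most `e^{-λε} ∫ (dμ/dν)^λ dμ` by Markov's inequality applied to `(dμ/dν)^λ`.
-/

open scoped ENNReal

namespace MeasureTheory

variable {Ω : Type*} [MeasurableSpace Ω]

lemma meas_ge_le_lintegral_rpow_div {μ : Measure Ω} {f : Ω → ℝ≥0∞} (hf : AEMeasurable f μ)
    {c : ℝ≥0∞} (hc₀ : c ≠ 0) (hc : c ≠ ∞) {p : ℝ} (hp : 0 < p) :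
    μ {x | c ≤ f x} ≤ (∫⁻ x, f x ^ p ∂μ) / c ^ p :=
  calc μ {x | c ≤ f x} ≤ μ {x | c ^ p ≤ f x ^ p} :=
        measure_mono fun _ hx ↦ ENNReal.rpow_le_rpow hx hp.le
    _ ≤ (∫⁻ x, f x ^ p ∂μ) / c ^ p :=
        meas_ge_le_lintegral_div (hf.pow_const p) (ENNReal.rpow_pos_of_nonneg
          (pos_iff_ne_zero.2 hc₀) hp.le).ne' (ENNReal.rpow_ne_top_of_nonneg hp.le hc)

namespace Measure

lemma measure_le_mul_add_measure_le_rnDeriv {μ ν : Measure Ω} [μ.HaveLebesgueDecomposition ν]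
    [SFinite ν] (hμν : μ ≪ ν) (c : ℝ≥0∞) (S : Set Ω) :
    μ S ≤ c * ν S + μ {x | c ≤ μ.rnDeriv ν x} := by
  set A := {x | c ≤ μ.rnDeriv ν x}
  have h_small : μ (S \ A) ≤ c * ν S :=
    calc μ (S \ A) = ∫⁻ x in S \ A, μ.rnDeriv ν x ∂ν := (setLIntegral_rnDeriv hμν _).symm
      _ ≤ ∫⁻ _ in S \ A, c ∂ν :=
          setLIntegral_mono measurable_const fun _ hx ↦ (not_le.1 hx.2).le
      _ = c * ν (S \ A) := setLIntegral_const _ _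
      _ ≤ c * ν S := by gcongr; exact Set.sdiff_subset
  calc μ S ≤ μ (S ∩ A) + μ (S \ A) := measure_le_inter_add_sdiff μ S A
    _ ≤ μ A + c * ν S := add_le_add (measure_mono Set.inter_subset_right) h_small
    _ = c * ν S + μ A := add_comm _ _

lemma measure_le_exp_mul_add_exp_neg_mul_lintegral_rnDeriv_rpow {μ ν : Measure Ω}
    [μ.HaveLebesgueDecomposition ν] [SFinite ν] (hμν : μ ≪ ν) {p : ℝ} (hp : 0 < p) (ε : ℝ)
    (S : Set Ω) :
    μ S ≤ ENNReal.ofReal (Real.exp ε) * ν S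
      + ENNReal.ofReal (Real.exp (-(p * ε))) * ∫⁻ x, μ.rnDeriv ν x ^ p ∂μ := by
  have h_pow : ENNReal.ofReal (Real.exp ε) ^ p = ENNReal.ofReal (Real.exp (p * ε)) := by
    rw [ENNReal.ofReal_rpow_of_pos (Real.exp_pos ε), ← Real.exp_mul, mul_comm]
  refine (measure_le_mul_add_measure_le_rnDeriv hμν _ S).trans (add_le_add_right ?_ _)
  calc μ {x | ENNReal.ofReal (Real.exp ε) ≤ μ.rnDeriv ν x}
      ≤ (∫⁻ x, μ.rnDeriv ν x ^ p ∂μ) / ENNReal.ofReal (Real.exp ε) ^ p :=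
        meas_ge_le_lintegral_rpow_div (measurable_rnDeriv μ ν).aemeasurable
          (by simpa using Real.exp_pos ε) ENNReal.ofReal_ne_top hp
    _ = ENNReal.ofReal (Real.exp (-(p * ε))) * ∫⁻ x, μ.rnDeriv ν x ^ p ∂μ := by
        rw [h_pow, ENNReal.div_eq_inv_mul, ← ENNReal.ofReal_inv_of_pos (Real.exp_pos _),
          Real.exp_neg]

end Measure

end MeasureTheory

lemma ENNReal.ofReal_exp_neg_mul_le_ofReal_exp_log_toReal_sub {E : ℝ≥0∞} (hE : E ≠ ∞) (a : ℝ) :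
    ENNReal.ofReal (Real.exp (-a)) * E ≤ ENNReal.ofReal (Real.exp (Real.log E.toReal - a)) := by
  rcases eq_or_ne E 0 with rfl | hE₀
  · simp
  rw [Real.exp_sub, Real.exp_log (ENNReal.toReal_pos hE₀ hE), div_eq_mul_inv, ← Real.exp_neg,
    ENNReal.ofReal_mul ENNReal.toReal_nonneg, ENNReal.ofReal_toReal hE, mul_comm]

/-- Tail bound converting moments to (ε,δ)-differential privacy: for `μ ≪ ν`,
`μ S ≤ e^ε ν S + e^{-λε} ∫ (dμ/dν)^λ dμ` for all measurable `S`; in particular if the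
λ-th moment `α(λ) = log ∫ (dμ/dν)^λ dμ` is finite, `μ` and `ν` are
`(ε, exp(α(λ) - λε))`-indistinguishable. -/
theorem moments_tail_bound
    {Ω : Type*} [MeasurableSpace Ω]
    (μ ν : Measure Ω) [IsProbabilityMeasure μ] [IsProbabilityMeasure ν]
    (hac : μ ≪ ν) :
    (∀ lam ε : ℝ, 0 < lam → 0 < ε → ∀ S : Set Ω, MeasurableSet S →
      μ S ≤ ENNReal.ofReal (Real.exp ε) * ν S
        + ENNReal.ofReal (Real.exp (-(lam * ε))) * ∫⁻ x, (μ.rnDeriv ν x) ^ lam ∂μ) ∧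
    (∀ lam ε : ℝ, 0 < lam → 0 < ε →
      (∫⁻ x, (μ.rnDeriv ν x) ^ lam ∂μ) ≠ ⊤ →
      ∀ S : Set Ω, MeasurableSet S →
        μ S ≤ ENNReal.ofReal (Real.exp ε) * ν S
          + ENNReal.ofReal
              (Real.exp (Real.log ((∫⁻ x, (μ.rnDeriv ν x) ^ lam ∂μ).toReal) - lam * ε))) := by
  refine ⟨fun lam ε hlam _ S _ ↦
    Measure.measure_le_exp_mul_add_exp_neg_mul_lintegral_rnDeriv_rpow hac hlam ε S,
    fun lam ε hlam _ hfin S _ ↦ ?_⟩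
  exact (Measure.measure_le_exp_mul_add_exp_neg_mul_lintegral_rnDeriv_rpow hac hlam ε S).trans
    (add_le_add_right (ENNReal.ofReal_exp_neg_mul_le_ofReal_exp_log_toReal_sub hfin _) _)
end

section
/- (Moments bound for adaptive two-stage composition.) Let μ₁ and ν₁ be probability measures on a measurable space Ω₁ with μ₁ ≪ ν₁, and let κ and η be Markov kernels from Ω₁ to a measurable space Ω₂ such that κ(ω₁) ≪ η(ω₁) for every ω₁. Fix λ > 0 and suppose there is a constant A₂ ∈ [0,∞) such that ∫ (d κ(ω₁)/d η(ω₁))^λ d κ(ω₁) ≤ e^{A₂} for every ω₁ ∈ Ω₁. Then μ₁ ⊗ₖ κ ≪ ν₁ ⊗ₖ η and ∫ (d(μ₁ ⊗ₖ κ)/d(ν₁ ⊗ₖ η))^λ d(μ₁ ⊗ₖ κ) ≤ e^{A₂} · ∫ (dμ₁/dν₁)^λ dμ₁. Consequently, the λ-th moment of the composed pair satisfies α_{comp}(λ) ≤ α₁(λ) + A₂, i.e., moments of adaptive compositions of mechanisms are subadditive. -/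
/-!
Write `ρ = ∂(μ ⊗ₘ κ)/∂(ν ⊗ₘ η)` and `r = ∂μ/∂ν`. The `λ`-th moment equals
`∫ ρ ^ (λ + 1) ∂(ν ⊗ₘ η) = ∫ (∫ ρ(a, ·) ^ (λ + 1) ∂η a) ∂ν`, so it suffices to bound each fiber by
`r a ^ (λ + 1) * ∫ (∂κ a/∂η a) ^ λ ∂κ a`. Morally `ρ(a, ·) = r a * ∂κ a/∂η a`, but without countable
generation this cannot be read off fiber by fiber. What does hold is that, for each fixed test
function `g`, `ρ(a, ·) • η a` integrates `g` like `r a • κ a` for `ν`-a.e. `a`. Testing against the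
countably many truncations `min ρ N ^ λ`, Hölder's inequality and monotone convergence give the
fiber bound.
-/

open MeasureTheory ProbabilityTheory
open scoped ENNReal

lemma ENNReal.rpow_add_one_eq_mul (x : ℝ≥0∞) {p : ℝ} (hp : 0 ≤ p) : x ^ (p + 1) = x * x ^ p := by
  rw [ENNReal.rpow_add_of_nonneg _ _ hp zero_le_one, ENNReal.rpow_one, mul_comm]

lemma ENNReal.iSup_min_natCast_rpow (x : ℝ≥0∞) {p : ℝ} (hp : 0 < p) :
    ⨆ N : ℕ, min x N ^ p = x ^ p := by
  have hsup : ⨆ N : ℕ, min x N = x := by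
    rw [← inf_iSup_eq, ENNReal.iSup_natCast, inf_top_eq]
  calc ⨆ N : ℕ, min x N ^ p = ENNReal.orderIsoRpow p hp (⨆ N : ℕ, min x N) :=
        ((ENNReal.orderIsoRpow p hp).map_iSup _).symm
    _ = x ^ p := by rw [hsup]; rfl

namespace MeasureTheory

variable {α : Type*} [MeasurableSpace α] {μ : Measure α} {p : ℝ}

lemma Measure.lintegral_rnDeriv_rpow_add_one {ν : Measure α} [μ.HaveLebesgueDecomposition ν]
    (hμν : μ ≪ ν) (hp : 0 ≤ p) :
    ∫⁻ x, μ.rnDeriv ν x ^ (p + 1) ∂ν = ∫⁻ x, μ.rnDeriv ν x ^ p ∂μ := by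
  simp_rw [ENNReal.rpow_add_one_eq_mul _ hp]
  exact lintegral_rnDeriv_mul hμν (by fun_prop)

/-- Hölder gives `I ≤ I ^ (p / (p + 1)) * J ^ (1 / (p + 1))`, and the first factor cancels
because `I` is finite. -/
lemma lintegral_rpow_add_one_le_of_le_lintegral_rpow_mul {m t : α → ℝ≥0∞}
    (hm : AEMeasurable m μ) (ht : AEMeasurable t μ) (hp : 0 < p)
    (hfin : ∫⁻ x, m x ^ (p + 1) ∂μ ≠ ∞)
    (hle : ∫⁻ x, m x ^ (p + 1) ∂μ ≤ ∫⁻ x, m x ^ p * t x ∂μ) :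
    ∫⁻ x, m x ^ (p + 1) ∂μ ≤ ∫⁻ x, t x ^ (p + 1) ∂μ := by
  set I := ∫⁻ x, m x ^ (p + 1) ∂μ
  set J := ∫⁻ x, t x ^ (p + 1) ∂μ
  have hq : 0 < p + 1 := by linarith
  set a := p / (p + 1)
  set b := 1 / (p + 1)
  have hab : a + b = 1 := by simp only [a, b]; field_simp
  have holder : I ≤ I ^ a * J ^ b := by
    refine hle.trans (le_of_eq_of_le (lintegral_congr fun x => ?_)
      (ENNReal.lintegral_mul_norm_pow_le (hm.pow_const _) (ht.pow_const _) (by positivity)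
        (by positivity) hab))
    simp only [a, b, ← ENNReal.rpow_mul]
    field_simp
    rw [ENNReal.rpow_one]
  rcases eq_or_ne I 0 with hI | hI
  · simp [hI]
  have hIa : I ^ a ≠ 0 := by simp [ENNReal.rpow_eq_zero_iff, hI, hfin]
  have hIa' : I ^ a ≠ ∞ := ENNReal.rpow_ne_top_of_nonneg (by positivity) hfin
  have hb : I ^ b ≤ J ^ b := by
    rw [← ENNReal.mul_le_mul_iff_right hIa hIa', ← ENNReal.rpow_add _ _ hI hfin, hab,
      ENNReal.rpow_one]
    exact holder
  exact (ENNReal.rpow_le_rpow_iff (by positivity)).mp hb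

lemma lintegral_rpow_add_one_le_of_forall_truncation [IsFiniteMeasure μ] {s t : α → ℝ≥0∞}
    (hs : Measurable s) (ht : AEMeasurable t μ) (hp : 0 < p)
    (hle : ∀ N : ℕ, ∫⁻ x, min (s x) N ^ p * s x ∂μ ≤ ∫⁻ x, min (s x) N ^ p * t x ∂μ) :
    ∫⁻ x, s x ^ (p + 1) ∂μ ≤ ∫⁻ x, t x ^ (p + 1) ∂μ := by
  have hq : 0 < p + 1 := by linarith
  have hmono : Monotone fun (N : ℕ) x => min (s x) N ^ (p + 1) := fun i j hij x =>
    ENNReal.rpow_le_rpow (min_le_min le_rfl (by exact_mod_cast hij)) hq.le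
  rw [lintegral_congr fun x => (ENNReal.iSup_min_natCast_rpow (s x) hq).symm,
    lintegral_iSup (fun N => by fun_prop) hmono]
  refine iSup_le fun N => ?_
  refine lintegral_rpow_add_one_le_of_le_lintegral_rpow_mul (by fun_prop) ht hp ?_
    ((lintegral_mono fun x => ?_).trans (hle N))
  · refine ne_top_of_le_ne_top (b := ∫⁻ _, (N : ℝ≥0∞) ^ (p + 1) ∂μ) ?_
      (lintegral_mono fun x => ENNReal.rpow_le_rpow (min_le_right _ _) hq.le)
    simp [lintegral_const, ENNReal.mul_eq_top, ENNReal.rpow_eq_top_iff, hq.not_gt]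
  · rw [ENNReal.rpow_add_one_eq_mul _ hp.le, mul_comm]
    gcongr
    exact min_le_left _ _

lemma lintegral_rpow_add_one_le_of_truncations_eq {K Q : Measure α} [IsFiniteMeasure K]
    [IsFiniteMeasure Q] (hKQ : K ≪ Q) (hp : 0 < p) {s : α → ℝ≥0∞} (hs : Measurable s)
    (c : ℝ≥0∞) (heq : ∀ N : ℕ, ∫⁻ x, min (s x) N ^ p * s x ∂Q = c * ∫⁻ x, min (s x) N ^ p ∂K) :
    ∫⁻ x, s x ^ (p + 1) ∂Q ≤ c ^ (p + 1) * ∫⁻ x, K.rnDeriv Q x ^ p ∂K := by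
  calc ∫⁻ x, s x ^ (p + 1) ∂Q ≤ ∫⁻ x, (c * K.rnDeriv Q x) ^ (p + 1) ∂Q := by
        refine lintegral_rpow_add_one_le_of_forall_truncation hs (by fun_prop) hp fun N => ?_
        rw [heq N, ← lintegral_rnDeriv_mul hKQ (by fun_prop),
          ← lintegral_const_mul _ (by fun_prop)]
        exact le_of_eq (lintegral_congr fun x => by ring)
    _ = c ^ (p + 1) * ∫⁻ x, K.rnDeriv Q x ^ p ∂K := by
        simp_rw [ENNReal.mul_rpow_of_nonneg _ _ (by linarith : (0:ℝ) ≤ p + 1)]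
        rw [lintegral_const_mul _ (by fun_prop), Measure.lintegral_rnDeriv_rpow_add_one hKQ hp.le]

end MeasureTheory

namespace ProbabilityTheory

variable {α β : Type*} [MeasurableSpace α] [MeasurableSpace β] {μ ν : Measure α}
  {κ η : Kernel α β} [IsFiniteMeasure μ] [IsFiniteMeasure ν] [IsFiniteKernel κ] [IsFiniteKernel η]
  {p : ℝ}

lemma ae_lintegral_mul_rnDeriv_compProd (hμν : μ ≪ ν) (hac : μ ⊗ₘ κ ≪ ν ⊗ₘ η)
    {g : α × β → ℝ≥0∞} (hg : Measurable g) :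
    ∀ᵐ a ∂ν, ∫⁻ b, g (a, b) * (μ ⊗ₘ κ).rnDeriv (ν ⊗ₘ η) (a, b) ∂η a
      = μ.rnDeriv ν a * ∫⁻ b, g (a, b) ∂κ a := by
  set ρ := (μ ⊗ₘ κ).rnDeriv (ν ⊗ₘ η)
  refine ae_eq_of_forall_setLIntegral_eq_of_sigmaFinite (by fun_prop) (by fun_prop)
    fun A hA _ => ?_
  calc ∫⁻ a in A, ∫⁻ b, g (a, b) * ρ (a, b) ∂η a ∂ν
      = ∫⁻ x in A ×ˢ Set.univ, ρ x * g x ∂(ν ⊗ₘ η) := by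
        rw [Measure.setLIntegral_compProd (by fun_prop) hA MeasurableSet.univ]
        simp [mul_comm]
    _ = ∫⁻ x in A ×ˢ Set.univ, g x ∂(μ ⊗ₘ κ) :=
        setLIntegral_rnDeriv_mul hac hg.aemeasurable (hA.prod MeasurableSet.univ)
    _ = ∫⁻ a in A, ∫⁻ b, g (a, b) ∂κ a ∂μ := by
        rw [Measure.setLIntegral_compProd hg hA MeasurableSet.univ]
        simp
    _ = ∫⁻ a in A, μ.rnDeriv ν a * ∫⁻ b, g (a, b) ∂κ a ∂ν :=
        (setLIntegral_rnDeriv_mul hμν hg.lintegral_kernel_prod_right'.aemeasurable hA).symm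

lemma ae_lintegral_rnDeriv_compProd_rpow_le (hμν : μ ≪ ν) (hκη : ∀ a, κ a ≪ η a)
    (hp : 0 < p) :
    ∀ᵐ a ∂ν, ∫⁻ b, (μ ⊗ₘ κ).rnDeriv (ν ⊗ₘ η) (a, b) ^ (p + 1) ∂η a
      ≤ μ.rnDeriv ν a ^ (p + 1) * ∫⁻ b, (κ a).rnDeriv (η a) b ^ p ∂κ a := by
  set ρ := (μ ⊗ₘ κ).rnDeriv (ν ⊗ₘ η)
  have htrunc : ∀ᵐ a ∂ν, ∀ N : ℕ, ∫⁻ b, min (ρ (a, b)) N ^ p * ρ (a, b) ∂η a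
      = μ.rnDeriv ν a * ∫⁻ b, min (ρ (a, b)) N ^ p ∂κ a :=
    ae_all_iff.mpr fun N => ae_lintegral_mul_rnDeriv_compProd hμν
      (hμν.compProd (.of_forall hκη)) (g := fun x => min (ρ x) N ^ p) (by fun_prop)
  filter_upwards [htrunc] with a ha
  exact lintegral_rpow_add_one_le_of_truncations_eq (hκη a) hp (by fun_prop) _ ha

lemma lintegral_rnDeriv_compProd_rpow_le (hμν : μ ≪ ν) (hκη : ∀ a, κ a ≪ η a)
    (hp : 0 < p) {E : ℝ≥0∞} (hE : ∀ a, ∫⁻ b, (κ a).rnDeriv (η a) b ^ p ∂κ a ≤ E) :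
    ∫⁻ x, (μ ⊗ₘ κ).rnDeriv (ν ⊗ₘ η) x ^ p ∂(μ ⊗ₘ κ) ≤ E * ∫⁻ a, μ.rnDeriv ν a ^ p ∂μ := by
  calc ∫⁻ x, (μ ⊗ₘ κ).rnDeriv (ν ⊗ₘ η) x ^ p ∂(μ ⊗ₘ κ)
      = ∫⁻ a, ∫⁻ b, (μ ⊗ₘ κ).rnDeriv (ν ⊗ₘ η) (a, b) ^ (p + 1) ∂η a ∂ν := by
        rw [← Measure.lintegral_rnDeriv_rpow_add_one (hμν.compProd (.of_forall hκη)) hp.le,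
          Measure.lintegral_compProd (by fun_prop)]
    _ ≤ ∫⁻ a, E * μ.rnDeriv ν a ^ (p + 1) ∂ν := by
        refine lintegral_mono_ae ?_
        filter_upwards [ae_lintegral_rnDeriv_compProd_rpow_le hμν hκη hp] with a ha
        exact ha.trans (by rw [mul_comm]; gcongr; exact hE a)
    _ = E * ∫⁻ a, μ.rnDeriv ν a ^ p ∂μ := by
        rw [lintegral_const_mul _ (by fun_prop), Measure.lintegral_rnDeriv_rpow_add_one hμν hp.le]

end ProbabilityTheory

theorem moments_compProd_le_general
    {Ω₁ Ω₂ : Type*} [MeasurableSpace Ω₁] [MeasurableSpace Ω₂]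
    (μ₁ ν₁ : Measure Ω₁) [IsProbabilityMeasure μ₁] [IsProbabilityMeasure ν₁]
    (hac₁ : μ₁ ≪ ν₁)
    (κ η : Kernel Ω₁ Ω₂) [IsMarkovKernel κ] [IsMarkovKernel η]
    (hacκ : ∀ ω₁ : Ω₁, κ ω₁ ≪ η ω₁)
    (lam : ℝ) (hlam : 0 < lam) (A₂ : ℝ)
    (hbound : ∀ ω₁ : Ω₁,
      ∫⁻ x, ((κ ω₁).rnDeriv (η ω₁) x) ^ lam ∂(κ ω₁) ≤ ENNReal.ofReal (Real.exp A₂)) :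
    (μ₁ ⊗ₘ κ) ≪ (ν₁ ⊗ₘ η) ∧
      ∫⁻ x, ((μ₁ ⊗ₘ κ).rnDeriv (ν₁ ⊗ₘ η) x) ^ lam ∂(μ₁ ⊗ₘ κ) ≤
        ENNReal.ofReal (Real.exp A₂) * ∫⁻ x, (μ₁.rnDeriv ν₁ x) ^ lam ∂μ₁ :=
  ⟨hac₁.compProd (.of_forall hacκ), lintegral_rnDeriv_compProd_rpow_le hac₁ hacκ hlam hbound⟩

/-- Moments bound for adaptive two-stage composition: if `μ₁ ≪ ν₁`, `κ ω ≪ η ω` for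
every `ω`, and the λ-th moment of each `(κ ω, η ω)` is bounded by `e^{A₂}`, then
`μ₁ ⊗ₘ κ ≪ ν₁ ⊗ₘ η` and the λ-th moment of the composed pair is bounded by
`e^{A₂}` times the λ-th moment of `(μ₁, ν₁)`. -/
theorem moments_compProd_le
    {Ω₁ Ω₂ : Type*} [MeasurableSpace Ω₁] [MeasurableSpace Ω₂]
    (μ₁ ν₁ : Measure Ω₁) [IsProbabilityMeasure μ₁] [IsProbabilityMeasure ν₁]
    (hac₁ : μ₁ ≪ ν₁)
    (κ η : Kernel Ω₁ Ω₂) [IsMarkovKernel κ] [IsMarkovKernel η]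
    (hacκ : ∀ ω₁ : Ω₁, κ ω₁ ≪ η ω₁)
    (lam : ℝ) (hlam : 0 < lam) (A₂ : ℝ) (hA₂ : 0 ≤ A₂)
    (hbound : ∀ ω₁ : Ω₁,
      ∫⁻ x, ((κ ω₁).rnDeriv (η ω₁) x) ^ lam ∂(κ ω₁) ≤ ENNReal.ofReal (Real.exp A₂)) :
    (μ₁ ⊗ₘ κ) ≪ (ν₁ ⊗ₘ η) ∧
      ∫⁻ x, ((μ₁ ⊗ₘ κ).rnDeriv (ν₁ ⊗ₘ η) x) ^ lam ∂(μ₁ ⊗ₘ κ) ≤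
        ENNReal.ofReal (Real.exp A₂) * ∫⁻ x, (μ₁.rnDeriv ν₁ x) ^ lam ∂μ₁ :=
  moments_compProd_le_general μ₁ ν₁ hac₁ κ η hacκ lam hlam A₂ hbound
end

section
/- (Inter-party moments composition in FedOnce: guest mechanisms plus an adaptive host mechanism.) Let k ≥ 2. For each guest party j ∈ {1,…,k−1}, let μⱼ and νⱼ be probability measures on a measurable space Ωⱼ (the distributions of party j's released representation under two neighboring datasets) with μⱼ ≪ νⱼ, and fix λ > 0 and constants a₁,…,a_{k−1} ∈ [0,∞) with ∫ (dμⱼ/dνⱼ)^λ dμⱼ ≤ e^{aⱼ} for each j. For the host party, let κ and η be Markov kernels from ∏_{j=1}^{k−1} Ωⱼ to a measurable space Ω_k (the host's output distribution given the guests' outputs, under the two neighboring datasets) with κ(o) ≪ η(o) for all o, and a constant a_k ∈ [0,∞) with ∫ (d κ(o)/d η(o))^λ d κ(o) ≤ e^{a_k} for every o ∈ ∏ⱼ Ωⱼ. Let M = (⊗_{j<k} μⱼ) ⊗ₖ κ and N = (⊗_{j<k} νⱼ) ⊗ₖ η be the joint output distributions on (∏_{j<k} Ωⱼ) × Ω_k.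 Then M ≪ N and ∫ (dM/dN)^λ dM ≤ exp(∑_{j=1}^{k} aⱼ); equivalently, the overall λ-th moment satisfies α_M(λ) ≤ ∑_{j=1}^{k} aⱼ, the sum of the per-party moment bounds. -/
open MeasureTheory ProbabilityTheory
open scoped ENNReal

/-!
On the guest side, `⊗ μⱼ` has density `x ↦ ∏ⱼ (dμⱼ/dνⱼ)(xⱼ)` with respect to `⊗ νⱼ`, so its
`λ`-th moment is the product of the guests' moments.

On the host side, identifying `f = d(P ⊗ κ)/d(Q ⊗ η)` with `(dP/dQ)(x) · (dκₓ/dηₓ)(y)` needs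
countability assumptions on the spaces, so `f` is never computed. Instead, for a truncation
`t = min f n` and `E = ∫ t^λ d(P ⊗ κ)`, expand `E` as an iterated integral against `Q` and `η x`
with densities and apply Young's inequality `(1 + λ) a b^λ ≤ a^(1+λ) + λ b^(1+λ)` pointwise. Since
`∫ g^(1+λ) dν = ∫ g^λ dμ` for `g = dμ/dν`, and `t^(1+λ) ≤ f t^λ`, this gives
`(1 + λ) E ≤ C G + λ E`, where `C` bounds the host moments and `G` is the moment of `(P, Q)`.
As `E < ∞` it cancels, and monotone convergence in `n` concludes.
-/

namespace ENNReal

theorem one_add_mul_mul_rpow_le {lam : ℝ} (hlam : 0 < lam) (u s : ℝ≥0∞) :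
    (1 + ENNReal.ofReal lam) * (u * s ^ lam)
      ≤ u ^ (1 + lam) + ENNReal.ofReal lam * s ^ (1 + lam) := by
  have hconj : (1 + lam).HolderConjugate ((1 + lam) / lam) :=
    Real.holderConjugate_iff.2 ⟨by linarith, by field_simp⟩
  have hyoung := ENNReal.young_inequality u (s ^ lam) hconj
  rw [← ENNReal.rpow_mul, mul_div_cancel₀ _ hlam.ne',
    ENNReal.ofReal_div_of_pos hlam, div_eq_mul_inv (s ^ (1 + lam)),
    ENNReal.inv_div (.inr ENNReal.ofReal_ne_top) (.inr (by positivity)), ← mul_div_assoc,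
    mul_comm (s ^ (1 + lam))] at hyoung
  have hp : ENNReal.ofReal (1 + lam) = 1 + ENNReal.ofReal lam := by
    rw [ENNReal.ofReal_add zero_le_one hlam.le, ENNReal.ofReal_one]
  have hp0 : 1 + ENNReal.ofReal lam ≠ 0 := by positivity
  have hpt : 1 + ENNReal.ofReal lam ≠ ∞ := by simp
  rw [hp, ← ENNReal.add_div, ENNReal.le_div_iff_mul_le (.inl hp0) (.inl hpt), mul_comm] at hyoung
  exact hyoung

lemma iSup_min_natCast_rpow_s6 {lam : ℝ} (hlam : 0 < lam) (a : ℝ≥0∞) :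
    ⨆ n : ℕ, min a n ^ lam = a ^ lam := by
  have hsup : ⨆ n : ℕ, min a n = a := by
    rw [← inf_iSup_eq, ENNReal.iSup_natCast]
    exact inf_top_eq a
  conv_rhs => rw [← hsup]
  exact (Monotone.map_iSup_of_continuousAt (ENNReal.continuous_rpow_const.continuousAt)
    (ENNReal.monotone_rpow_of_nonneg hlam.le) (ENNReal.zero_rpow_of_pos hlam)).symm

end ENNReal

namespace MeasureTheory.Measure

section RnDeriv

variable {α : Type*} [MeasurableSpace α] {μ ν : Measure α} [μ.HaveLebesgueDecomposition ν]
  {lam : ℝ}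

lemma lintegral_rnDeriv_rpow_one_add (hμν : μ ≪ ν) (hlam : 0 ≤ lam) :
    ∫⁻ x, μ.rnDeriv ν x ^ (1 + lam) ∂ν = ∫⁻ x, μ.rnDeriv ν x ^ lam ∂μ := by
  rw [← lintegral_rnDeriv_mul hμν (by fun_prop)]
  congr with x
  rw [ENNReal.rpow_add_of_nonneg _ _ zero_le_one hlam, ENNReal.rpow_one]

lemma lintegral_rpow_one_add_le_of_le_rnDeriv (hμν : μ ≪ ν) (hlam : 0 ≤ lam)
    {t : α → ℝ≥0∞} (ht : Measurable t) (hle : t ≤ μ.rnDeriv ν) :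
    ∫⁻ x, t x ^ (1 + lam) ∂ν ≤ ∫⁻ x, t x ^ lam ∂μ := by
  rw [← lintegral_rnDeriv_mul hμν (by fun_prop)]
  refine lintegral_mono fun x => ?_
  rw [ENNReal.rpow_add_of_nonneg _ _ zero_le_one hlam, ENNReal.rpow_one]
  gcongr
  exact hle x

lemma one_add_mul_lintegral_rpow_le (hμν : μ ≪ ν) (hlam : 0 < lam)
    (u : ℝ≥0∞) {s : α → ℝ≥0∞} (hs : Measurable s) :
    (1 + ENNReal.ofReal lam) * (u * ∫⁻ x, s x ^ lam ∂μ)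
      ≤ u ^ (1 + lam) * ∫⁻ x, μ.rnDeriv ν x ^ (1 + lam) ∂ν
        + ENNReal.ofReal lam * ∫⁻ x, s x ^ (1 + lam) ∂ν := by
  rw [← lintegral_rnDeriv_mul hμν (by fun_prop), ← lintegral_const_mul _ (by fun_prop),
    ← lintegral_const_mul _ (by fun_prop), ← lintegral_const_mul _ (by fun_prop),
    ← lintegral_const_mul _ (by fun_prop), ← lintegral_add_left (by fun_prop)]
  refine lintegral_mono fun x => ?_
  calc (1 + ENNReal.ofReal lam) * (u * (μ.rnDeriv ν x * s x ^ lam))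
      = (1 + ENNReal.ofReal lam) * (u * μ.rnDeriv ν x * s x ^ lam) := by ring
    _ ≤ (u * μ.rnDeriv ν x) ^ (1 + lam) + ENNReal.ofReal lam * s x ^ (1 + lam) :=
      ENNReal.one_add_mul_mul_rpow_le hlam _ _
    _ = u ^ (1 + lam) * μ.rnDeriv ν x ^ (1 + lam) + ENNReal.ofReal lam * s x ^ (1 + lam) := by
      rw [ENNReal.mul_rpow_of_nonneg _ _ (by linarith)]

end RnDeriv

section CompProd

variable {X Y : Type*} [MeasurableSpace X] [MeasurableSpace Y]
  {P Q : Measure X} [IsFiniteMeasure P] [IsFiniteMeasure Q]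
  {κ η : Kernel X Y} [IsFiniteKernel κ] [IsFiniteKernel η] {lam : ℝ} {C : ℝ≥0∞}

lemma one_add_mul_lintegral_rpow_compProd_le (hPQ : P ≪ Q) (hκη : ∀ x, κ x ≪ η x)
    (hlam : 0 < lam) (hC : ∀ x, ∫⁻ y, (κ x).rnDeriv (η x) y ^ lam ∂κ x ≤ C)
    {t : X × Y → ℝ≥0∞} (ht : Measurable t) :
    (1 + ENNReal.ofReal lam) * ∫⁻ z, t z ^ lam ∂(P ⊗ₘ κ)
      ≤ C * ∫⁻ x, P.rnDeriv Q x ^ lam ∂P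
        + ENNReal.ofReal lam * ∫⁻ z, t z ^ (1 + lam) ∂(Q ⊗ₘ η) := by
  have hκt : Measurable fun x => ∫⁻ y, t (x, y) ^ lam ∂κ x :=
    (ht.pow_const lam).lintegral_kernel_prod_right'
  have hηt : Measurable fun x => ∫⁻ y, t (x, y) ^ (1 + lam) ∂η x :=
    (ht.pow_const _).lintegral_kernel_prod_right'
  rw [lintegral_compProd (by fun_prop), lintegral_compProd (by fun_prop),
    ← lintegral_rnDeriv_mul hPQ hκt.aemeasurable, ← lintegral_rnDeriv_rpow_one_add hPQ hlam.le,
    mul_comm C, ← lintegral_mul_const _ (by fun_prop), ← lintegral_const_mul _ (by fun_prop),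
    ← lintegral_const_mul _ hηt, ← lintegral_add_left (by fun_prop)]
  refine lintegral_mono fun x => ?_
  calc (1 + ENNReal.ofReal lam) * (P.rnDeriv Q x * ∫⁻ y, t (x, y) ^ lam ∂κ x)
      ≤ P.rnDeriv Q x ^ (1 + lam) * ∫⁻ y, (κ x).rnDeriv (η x) y ^ (1 + lam) ∂η x
        + ENNReal.ofReal lam * ∫⁻ y, t (x, y) ^ (1 + lam) ∂η x :=
      one_add_mul_lintegral_rpow_le (hκη x) hlam _ (by fun_prop)
    _ ≤ P.rnDeriv Q x ^ (1 + lam) * C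
          + ENNReal.ofReal lam * ∫⁻ y, t (x, y) ^ (1 + lam) ∂η x := by
      rw [lintegral_rnDeriv_rpow_one_add (hκη x) hlam.le]
      gcongr
      exact hC x

lemma lintegral_min_rnDeriv_compProd_rpow_le (hPQ : P ≪ Q) (hκη : ∀ x, κ x ≪ η x)
    (hlam : 0 < lam) (hC : ∀ x, ∫⁻ y, (κ x).rnDeriv (η x) y ^ lam ∂κ x ≤ C) (n : ℕ) :
    ∫⁻ z, min ((P ⊗ₘ κ).rnDeriv (Q ⊗ₘ η) z) n ^ lam ∂(P ⊗ₘ κ)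
      ≤ C * ∫⁻ x, P.rnDeriv Q x ^ lam ∂P := by
  set t := fun z => min ((P ⊗ₘ κ).rnDeriv (Q ⊗ₘ η) z) (n : ℝ≥0∞)
  have ht : Measurable t := (measurable_rnDeriv _ _).min measurable_const
  have hfinite : ∫⁻ z, t z ^ lam ∂(P ⊗ₘ κ) ≠ ∞ := by
    refine ne_top_of_le_ne_top (lintegral_const_lt_top (μ := P ⊗ₘ κ)
      (ENNReal.rpow_ne_top_of_nonneg hlam.le (ENNReal.natCast_ne_top n))).ne
      (lintegral_mono fun z => ?_)
    gcongr
    exact min_le_right _ _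
  have hmain := one_add_mul_lintegral_rpow_compProd_le hPQ hκη hlam hC ht
  have hself : ∫⁻ z, t z ^ (1 + lam) ∂(Q ⊗ₘ η) ≤ ∫⁻ z, t z ^ lam ∂(P ⊗ₘ κ) :=
    lintegral_rpow_one_add_le_of_le_rnDeriv (hPQ.compProd (.of_forall hκη)) hlam.le ht
      fun z => min_le_left _ _
  rw [add_mul, one_mul] at hmain
  exact ENNReal.le_of_add_le_add_right (ENNReal.mul_ne_top ENNReal.ofReal_ne_top hfinite)
    (hmain.trans (by gcongr))

theorem lintegral_rnDeriv_compProd_rpow_le (hPQ : P ≪ Q) (hκη : ∀ x, κ x ≪ η x)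
    (hlam : 0 < lam) (hC : ∀ x, ∫⁻ y, (κ x).rnDeriv (η x) y ^ lam ∂κ x ≤ C) :
    ∫⁻ z, (P ⊗ₘ κ).rnDeriv (Q ⊗ₘ η) z ^ lam ∂(P ⊗ₘ κ)
      ≤ C * ∫⁻ x, P.rnDeriv Q x ^ lam ∂P := by
  rw [lintegral_congr fun z => (ENNReal.iSup_min_natCast_rpow_s6 hlam _).symm,
    lintegral_iSup (fun n => by fun_prop) fun m n hmn z => by gcongr]
  exact iSup_le (lintegral_min_rnDeriv_compProd_rpow_le hPQ hκη hlam hC)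

end CompProd

section Pi

variable {ι : Type*} [Fintype ι] {Ω : ι → Type*} [∀ i, MeasurableSpace (Ω i)]
  {μ ν : ∀ i, Measure (Ω i)}

lemma lintegral_pi_prod_eq_prod_lintegral [∀ i, IsProbabilityMeasure (μ i)]
    {f : ∀ i, Ω i → ℝ≥0∞} (hf : ∀ i, Measurable (f i)) :
    ∫⁻ x, ∏ i, f i (x i) ∂Measure.pi μ = ∏ i, ∫⁻ y, f i y ∂μ i := by
  rw [lintegral_prod_eq_prod_lintegral_of_indepFun _ _
    (iIndepFun_pi fun i => (hf i).aemeasurable) fun i => (hf i).comp (measurable_pi_apply i)]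
  exact Finset.prod_congr rfl fun i _ => (measurePreserving_eval μ i).lintegral_comp (hf i)

variable [∀ i, IsProbabilityMeasure (μ i)] [∀ i, IsProbabilityMeasure (ν i)]

lemma pi_eq_withDensity_prod_rnDeriv (hμν : ∀ i, μ i ≪ ν i) :
    Measure.pi μ = (Measure.pi ν).withDensity fun x => ∏ i, (μ i).rnDeriv (ν i) (x i) := by
  refine pi_eq fun s hs => ?_
  have hind : (Set.univ.pi s).indicator (fun x => ∏ i, (μ i).rnDeriv (ν i) (x i))
      = fun x => ∏ i, (s i).indicator ((μ i).rnDeriv (ν i)) (x i) := by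
    classical
    funext x
    simp only [Set.indicator_apply, Set.mem_univ_pi, Finset.prod_ite_zero, Finset.mem_univ,
      true_implies]
  rw [withDensity_apply _ (.univ_pi hs), ← lintegral_indicator (.univ_pi hs), hind,
    lintegral_pi_prod_eq_prod_lintegral fun i => (measurable_rnDeriv _ _).indicator (hs i)]
  refine Finset.prod_congr rfl fun i _ => ?_
  rw [lintegral_indicator (hs i), setLIntegral_rnDeriv (hμν i)]

lemma absolutelyContinuous_pi (hμν : ∀ i, μ i ≪ ν i) : Measure.pi μ ≪ Measure.pi ν := by
  rw [pi_eq_withDensity_prod_rnDeriv hμν]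
  exact withDensity_absolutelyContinuous _ _

lemma lintegral_rnDeriv_pi_rpow (hμν : ∀ i, μ i ≪ ν i) {lam : ℝ} (hlam : 0 ≤ lam) :
    ∫⁻ x, (Measure.pi μ).rnDeriv (Measure.pi ν) x ^ lam ∂Measure.pi μ
      = ∏ i, ∫⁻ y, (μ i).rnDeriv (ν i) y ^ lam ∂μ i := by
  have hrn : (Measure.pi μ).rnDeriv (Measure.pi ν) =ᵐ[Measure.pi μ]
      fun x => ∏ i, (μ i).rnDeriv (ν i) (x i) := by
    refine (absolutelyContinuous_pi hμν).ae_eq ?_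
    conv_lhs => rw [pi_eq_withDensity_prod_rnDeriv hμν]
    exact rnDeriv_withDensity _ (by fun_prop)
  calc ∫⁻ x, (Measure.pi μ).rnDeriv (Measure.pi ν) x ^ lam ∂Measure.pi μ
      = ∫⁻ x, ∏ i, (μ i).rnDeriv (ν i) (x i) ^ lam ∂Measure.pi μ := by
        refine lintegral_congr_ae ?_
        filter_upwards [hrn] with x hx
        rw [hx, ENNReal.prod_rpow_of_nonneg hlam]
    _ = ∏ i, ∫⁻ y, (μ i).rnDeriv (ν i) y ^ lam ∂μ i :=
        lintegral_pi_prod_eq_prod_lintegral (f := fun i y => (μ i).rnDeriv (ν i) y ^ lam)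
          fun i => by fun_prop

end Pi

end MeasureTheory.Measure

theorem fedonce_interparty_moments_general
    (k : ℕ)
    (Ω : Fin (k - 1) → Type*) [∀ j, MeasurableSpace (Ω j)]
    (Ωk : Type*) [MeasurableSpace Ωk]
    (μ ν : ∀ j, Measure (Ω j))
    [∀ j, IsProbabilityMeasure (μ j)] [∀ j, IsProbabilityMeasure (ν j)]
    (hac : ∀ j, μ j ≪ ν j)
    (lam : ℝ) (hlam : 0 < lam)
    (a : Fin (k - 1) → ℝ)
    (hguest : ∀ j, ∫⁻ x, ((μ j).rnDeriv (ν j) x) ^ lam ∂(μ j)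
      ≤ ENNReal.ofReal (Real.exp (a j)))
    (κ η : Kernel (∀ j, Ω j) Ωk) [IsMarkovKernel κ] [IsMarkovKernel η]
    (hacκ : ∀ o : ∀ j, Ω j, κ o ≪ η o)
    (ak : ℝ)
    (hhost : ∀ o : ∀ j, Ω j,
      ∫⁻ x, ((κ o).rnDeriv (η o) x) ^ lam ∂(κ o) ≤ ENNReal.ofReal (Real.exp ak)) :
    (Measure.pi μ ⊗ₘ κ) ≪ (Measure.pi ν ⊗ₘ η) ∧
      ∫⁻ x, ((Measure.pi μ ⊗ₘ κ).rnDeriv (Measure.pi ν ⊗ₘ η) x) ^ lam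
          ∂(Measure.pi μ ⊗ₘ κ)
        ≤ ENNReal.ofReal (Real.exp ((∑ j, a j) + ak)) := by
  have hpi : Measure.pi μ ≪ Measure.pi ν := Measure.absolutelyContinuous_pi hac
  refine ⟨hpi.compProd (.of_forall hacκ), ?_⟩
  calc ∫⁻ x, ((Measure.pi μ ⊗ₘ κ).rnDeriv (Measure.pi ν ⊗ₘ η) x) ^ lam
          ∂(Measure.pi μ ⊗ₘ κ)
      ≤ ENNReal.ofReal (Real.exp ak)
          * ∫⁻ x, (Measure.pi μ).rnDeriv (Measure.pi ν) x ^ lam ∂Measure.pi μ :=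
        Measure.lintegral_rnDeriv_compProd_rpow_le hpi hacκ hlam hhost
    _ = ENNReal.ofReal (Real.exp ak) * ∏ j, ∫⁻ y, (μ j).rnDeriv (ν j) y ^ lam ∂μ j := by
        rw [Measure.lintegral_rnDeriv_pi_rpow hac hlam.le]
    _ ≤ ENNReal.ofReal (Real.exp ak) * ∏ j, ENNReal.ofReal (Real.exp (a j)) := by
        gcongr with j
        exact hguest j
    _ = ENNReal.ofReal (Real.exp ((∑ j, a j) + ak)) := by
        rw [Real.exp_add, Real.exp_sum, ENNReal.ofReal_mul (by positivity),
          ENNReal.ofReal_prod_of_nonneg fun j _ => (Real.exp_pos _).le, mul_comm]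

/-- Inter-party moments composition in FedOnce: `k-1` guest mechanisms run independently
on the (shared) dataset and a host mechanism runs adaptively on the guests' outputs.
If each guest pair `(μ j, ν j)` has λ-th moment at most `e^{a j}` and the host kernels
`(κ o, η o)` have λ-th moment at most `e^{a_k}` uniformly in `o`, then the joint output
distributions `M = (⊗ μ j) ⊗ₘ κ` and `N = (⊗ ν j) ⊗ₘ η` satisfy `M ≪ N` and the overall
λ-th moment of `(M, N)` is at most `exp((∑ j, a j) + a_k)`. -/
theorem fedonce_interparty_moments
    (k : ℕ) (hk : 2 ≤ k)
    (Ω : Fin (k - 1) → Type*) [∀ j, MeasurableSpace (Ω j)]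
    (Ωk : Type*) [MeasurableSpace Ωk]
    (μ ν : ∀ j, Measure (Ω j))
    [∀ j, IsProbabilityMeasure (μ j)] [∀ j, IsProbabilityMeasure (ν j)]
    (hac : ∀ j, μ j ≪ ν j)
    (lam : ℝ) (hlam : 0 < lam)
    (a : Fin (k - 1) → ℝ) (ha : ∀ j, 0 ≤ a j)
    (hguest : ∀ j, ∫⁻ x, ((μ j).rnDeriv (ν j) x) ^ lam ∂(μ j)
      ≤ ENNReal.ofReal (Real.exp (a j)))
    (κ η : Kernel (∀ j, Ω j) Ωk) [IsMarkovKernel κ] [IsMarkovKernel η]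
    (hacκ : ∀ o : ∀ j, Ω j, κ o ≪ η o)
    (ak : ℝ) (hak : 0 ≤ ak)
    (hhost : ∀ o : ∀ j, Ω j,
      ∫⁻ x, ((κ o).rnDeriv (η o) x) ^ lam ∂(κ o) ≤ ENNReal.ofReal (Real.exp ak)) :
    (Measure.pi μ ⊗ₘ κ) ≪ (Measure.pi ν ⊗ₘ η) ∧
      ∫⁻ x, ((Measure.pi μ ⊗ₘ κ).rnDeriv (Measure.pi ν ⊗ₘ η) x) ^ lam
          ∂(Measure.pi μ ⊗ₘ κ)
        ≤ ENNReal.ofReal (Real.exp ((∑ j, a j) + ak)) :=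
  fedonce_interparty_moments_general k Ω Ωk μ ν hac lam hlam a hguest κ η hacκ ak hhost
end

section
/- (Core of the FedOnce-L1 privacy theorem: from the accumulated moments bound to (ε, δ)-differential privacy.) Let μ and ν be probability measures on a measurable space with μ ≪ ν (the overall output distributions of FedOnce-L1 on two neighboring datasets). Let q > 0 (sampling probability of SGD), σ > 0 (noise scale), k ≥ 1 parties with epoch counts T₁,…,T_k ≥ 1 and total T := ∑_{j=1}^{k} Tⱼ, and let λ > 0, ε > 0, δ ∈ (0,1). Suppose: (i) the accumulated λ-th moment satisfies ∫ (dμ/dν)^λ dμ ≤ exp(q²λ²T/σ²); (ii) q²λ²T/σ² ≤ λε/2; and (iii) exp(−λε/2) ≤ δ. Then μ and ν are (ε, δ)-indistinguishable: for every measurable set S, μ(S) ≤ e^ε·ν(S) + δ. -/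
open MeasureTheory ProbabilityTheory ENNReal

/-- Core of the FedOnce-L1 privacy theorem: if the accumulated λ-th moment of the
overall output distributions is at most `exp(q²λ²T/σ²)` with `T = ∑ j, T j`, and
`q²λ²T/σ² ≤ λε/2` and `exp(-λε/2) ≤ δ`, then the output distributions are
(ε,δ)-indistinguishable. -/
theorem fedonce_l1_privacy_core
    {Ω : Type*} [MeasurableSpace Ω]
    (μ ν : Measure Ω) [IsProbabilityMeasure μ] [IsProbabilityMeasure ν]
    (hac : μ ≪ ν)
    (q σ : ℝ) (hq : 0 < q) (hσ : 0 < σ)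
    (k : ℕ) (hk : 1 ≤ k) (T : Fin k → ℕ) (hT : ∀ j, 1 ≤ T j)
    (lam ε δ : ℝ) (hlam : 0 < lam) (hε : 0 < ε) (hδ : δ ∈ Set.Ioo (0 : ℝ) 1)
    (h1 : ∫⁻ x, (μ.rnDeriv ν x) ^ lam ∂μ
      ≤ ENNReal.ofReal (Real.exp (q ^ 2 * lam ^ 2 * (∑ j, (T j : ℝ)) / σ ^ 2)))
    (h2 : q ^ 2 * lam ^ 2 * (∑ j, (T j : ℝ)) / σ ^ 2 ≤ lam * ε / 2)
    (h3 : Real.exp (-(lam * ε) / 2) ≤ δ) :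
    ∀ S : Set Ω, MeasurableSet S →
      μ S ≤ ENNReal.ofReal (Real.exp ε) * ν S + ENNReal.ofReal δ := by
  intro S hS
  set f := μ.rnDeriv ν with hfdef
  have hfm : Measurable f := μ.measurable_rnDeriv ν
  set c : ℝ≥0∞ := ENNReal.ofReal (Real.exp ε) with hcdef
  have hc0 : c ≠ 0 := (ENNReal.ofReal_pos.mpr (Real.exp_pos ε)).ne'
  have hctop : c ≠ ⊤ := ENNReal.ofReal_ne_top
  set A := S ∩ {x | f x ≤ c} with hA
  set B := S ∩ {x | c < f x} with hB
  have hAm : MeasurableSet A := hS.inter (hfm measurableSet_Iic)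
  have hBm : MeasurableSet B := hS.inter (hfm measurableSet_Ioi)
  have hSAB : S = A ∪ B := by
    ext x
    simp only [hA, hB, Set.mem_inter_iff, Set.mem_union, Set.mem_setOf_eq]
    constructor
    · intro hx; rcases le_or_gt (f x) c with h | h
      · exact Or.inl ⟨hx, h⟩
      · exact Or.inr ⟨hx, h⟩
    · rintro (⟨hx, _⟩ | ⟨hx, _⟩) <;> exact hx
  -- bound on A
  have hμA : μ A ≤ c * ν S := by
    have h0 : μ A = ∫⁻ x in A, f x ∂ν := (Measure.setLIntegral_rnDeriv hac A).symm
    have h1' : ∫⁻ x in A, f x ∂ν ≤ ∫⁻ _ in A, c ∂ν := by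
      refine setLIntegral_mono_ae aemeasurable_const ?_
      filter_upwards with x hx
      exact hx.2
    calc μ A = ∫⁻ x in A, f x ∂ν := h0
      _ ≤ ∫⁻ _ in A, c ∂ν := h1'
      _ = c * ν A := by simp [mul_comm]
      _ ≤ c * ν S := by
          exact mul_le_mul_right (measure_mono (Set.inter_subset_left)) c
  -- moment bound
  have hmom : ∫⁻ x, (f x) ^ lam ∂μ ≤ ENNReal.ofReal (Real.exp (lam * ε / 2)) :=
    h1.trans (ENNReal.ofReal_le_ofReal (Real.exp_le_exp.mpr h2))
  -- bound on B via Markov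
  have hμB : μ B ≤ ENNReal.ofReal δ := by
    have hone : ∀ x ∈ B, (1 : ℝ≥0∞) ≤ (f x) ^ lam * c ^ (-lam) := by
      intro x hx
      have hfx : c ≤ f x := le_of_lt hx.2
      have hcl : c ^ lam ≤ (f x) ^ lam := ENNReal.rpow_le_rpow hfx hlam.le
      have hcc : c ^ lam * c ^ (-lam) = 1 := by
        rw [← ENNReal.rpow_add _ _ hc0 hctop]
        simp
      calc (1 : ℝ≥0∞) = c ^ lam * c ^ (-lam) := hcc.symm
        _ ≤ (f x) ^ lam * c ^ (-lam) := mul_le_mul_left hcl _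
    have hstep : μ B ≤ c ^ (-lam) * ∫⁻ x, (f x) ^ lam ∂μ := by
      calc μ B = ∫⁻ _ in B, (1 : ℝ≥0∞) ∂μ := by simp
        _ ≤ ∫⁻ x in B, (f x) ^ lam * c ^ (-lam) ∂μ := by
            refine setLIntegral_mono_ae ((hfm.pow_const lam).mul_const _).aemeasurable ?_
            filter_upwards with x hx
            exact hone x hx
        _ = (∫⁻ x in B, (f x) ^ lam ∂μ) * c ^ (-lam) := by
            rw [lintegral_mul_const _ (hfm.pow_const lam)]
        _ ≤ (∫⁻ x, (f x) ^ lam ∂μ) * c ^ (-lam) := by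
            exact mul_le_mul_left (setLIntegral_le_lintegral _ _) _
        _ = c ^ (-lam) * ∫⁻ x, (f x) ^ lam ∂μ := mul_comm _ _
    have hcneg : c ^ (-lam) = ENNReal.ofReal (Real.exp (-(lam * ε))) := by
      rw [hcdef, ENNReal.ofReal_rpow_of_pos (Real.exp_pos ε)]
      congr 1
      rw [Real.rpow_def_of_pos (Real.exp_pos ε), Real.log_exp]
      ring_nf
    calc μ B ≤ c ^ (-lam) * ∫⁻ x, (f x) ^ lam ∂μ := hstep
      _ ≤ ENNReal.ofReal (Real.exp (-(lam * ε))) * ENNReal.ofReal (Real.exp (lam * ε / 2)) := by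
          rw [hcneg]; exact mul_le_mul_right hmom _
      _ = ENNReal.ofReal (Real.exp (-(lam * ε) / 2)) := by
          rw [← ENNReal.ofReal_mul (Real.exp_pos _).le, ← Real.exp_add]
          congr 1; ring
      _ ≤ ENNReal.ofReal δ := ENNReal.ofReal_le_ofReal h3
  calc μ S ≤ μ A + μ B := hSAB ▸ measure_union_le A B
    _ ≤ c * ν S + ENNReal.ofReal δ := add_le_add hμA hμB
end

section
/- (Exact λ-th moment of the one-dimensional Gaussian mechanism.) Let m, m' ∈ ℝ and σ > 0, and let μ = N(m, σ²) and ν = N(m', σ²) be Gaussian measures on ℝ. Then μ ≪ ν and for every real λ > 0, ∫ (dμ/dν)^λ dμ = exp( λ(λ+1)(m − m')² / (2σ²) ); equivalently, the λ-th moment of the privacy loss is α(λ) = λ(λ+1)(m − m')²/(2σ²). -/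
/-!
With a common variance `v`, the density ratio `dN(μ, v)/dN(μ', v)` is the exponential of an affine
function of `x`. Hence `p_μ · (p_μ / p_μ')^λ` is again a Gaussian density, centred at
`(λ + 1) μ - λ μ'`, times the constant `exp (λ (λ + 1) (μ - μ')² / (2 v))` left over from completing
the square; integrating leaves exactly that constant.
-/

open MeasureTheory ProbabilityTheory Real
open scoped NNReal ENNReal

namespace ProbabilityTheory

variable {v : ℝ≥0}

lemma gaussianPDFReal_div_gaussianPDFReal (hv : v ≠ 0) (μ μ' x : ℝ) :
    gaussianPDFReal μ v x / gaussianPDFReal μ' v x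
      = exp (((x - μ') ^ 2 - (x - μ) ^ 2) / (2 * v)) := by
  have hc : (√(2 * π * v))⁻¹ ≠ 0 := by
    have : (0 : ℝ) < v := by positivity
    positivity
  rw [gaussianPDFReal, gaussianPDFReal, mul_div_mul_left _ _ hc, ← exp_sub]
  ring_nf

lemma gaussianPDFReal_mul_div_rpow (hv : v ≠ 0) (μ μ' lam x : ℝ) :
    gaussianPDFReal μ v x * (gaussianPDFReal μ v x / gaussianPDFReal μ' v x) ^ lam
      = exp (lam * (lam + 1) * (μ - μ') ^ 2 / (2 * v))
        * gaussianPDFReal ((lam + 1) * μ - lam * μ') v x := by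
  rw [gaussianPDFReal_div_gaussianPDFReal hv, ← exp_mul, gaussianPDFReal, gaussianPDFReal,
    mul_assoc, ← exp_add, mul_left_comm, ← exp_add]
  congr 2
  have : (v : ℝ) ≠ 0 := by positivity
  field_simp
  ring

/-- Kept as a real ratio under `ofReal` so that its real powers can be computed in `ℝ`. -/
noncomputable def gaussianDensityRatio (μ μ' : ℝ) (v : ℝ≥0) (x : ℝ) : ℝ≥0∞ :=
  ENNReal.ofReal (gaussianPDFReal μ v x / gaussianPDFReal μ' v x)

lemma measurable_gaussianDensityRatio (μ μ' : ℝ) (v : ℝ≥0) :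
    Measurable (gaussianDensityRatio μ μ' v) :=
  ENNReal.measurable_ofReal.comp
    ((measurable_gaussianPDFReal μ v).div (measurable_gaussianPDFReal μ' v))

lemma gaussianReal_eq_withDensity_gaussianDensityRatio (hv : v ≠ 0) (μ μ' : ℝ) :
    gaussianReal μ v = (gaussianReal μ' v).withDensity (gaussianDensityRatio μ μ' v) := by
  rw [gaussianReal_of_var_ne_zero μ hv, gaussianReal_of_var_ne_zero μ' hv,
    ← withDensity_mul _ (measurable_gaussianPDF μ' v) (measurable_gaussianDensityRatio μ μ' v)]
  congr 1
  ext x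
  rw [Pi.mul_apply, gaussianPDF, gaussianPDF, gaussianDensityRatio,
    ← ENNReal.ofReal_mul (gaussianPDFReal_nonneg μ' v x),
    mul_div_cancel₀ _ (gaussianPDFReal_pos μ' v x hv).ne']

lemma gaussianReal_absolutelyContinuous_gaussianReal (hv : v ≠ 0) (μ μ' : ℝ) :
    gaussianReal μ v ≪ gaussianReal μ' v :=
  (gaussianReal_absolutelyContinuous μ hv).trans (gaussianReal_absolutelyContinuous' μ' hv)

lemma rnDeriv_gaussianReal_ae_eq (hv : v ≠ 0) (μ μ' : ℝ) :
    (gaussianReal μ v).rnDeriv (gaussianReal μ' v)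
      =ᵐ[gaussianReal μ v] gaussianDensityRatio μ μ' v := by
  have h := Measure.rnDeriv_withDensity (gaussianReal μ' v) (measurable_gaussianDensityRatio μ μ' v)
  rw [← gaussianReal_eq_withDensity_gaussianDensityRatio hv] at h
  exact (gaussianReal_absolutelyContinuous_gaussianReal hv μ μ').ae_le h

lemma gaussianPDF_mul_gaussianDensityRatio_rpow (hv : v ≠ 0) (μ μ' lam x : ℝ) :
    gaussianPDF μ v x * gaussianDensityRatio μ μ' v x ^ lam
      = ENNReal.ofReal (exp (lam * (lam + 1) * (μ - μ') ^ 2 / (2 * v)))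
        * gaussianPDF ((lam + 1) * μ - lam * μ') v x := by
  have hratio : 0 < gaussianPDFReal μ v x / gaussianPDFReal μ' v x :=
    div_pos (gaussianPDFReal_pos μ v x hv) (gaussianPDFReal_pos μ' v x hv)
  rw [gaussianDensityRatio, ENNReal.ofReal_rpow_of_pos hratio, gaussianPDF, gaussianPDF,
    ← ENNReal.ofReal_mul (gaussianPDFReal_nonneg μ v x), ← ENNReal.ofReal_mul (exp_pos _).le,
    gaussianPDFReal_mul_div_rpow hv]

theorem lintegral_rnDeriv_rpow_gaussianReal (hv : v ≠ 0) (μ μ' lam : ℝ) :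
    ∫⁻ x, (gaussianReal μ v).rnDeriv (gaussianReal μ' v) x ^ lam ∂(gaussianReal μ v)
      = ENNReal.ofReal (exp (lam * (lam + 1) * (μ - μ') ^ 2 / (2 * v))) := by
  calc ∫⁻ x, (gaussianReal μ v).rnDeriv (gaussianReal μ' v) x ^ lam ∂(gaussianReal μ v)
      = ∫⁻ x, gaussianDensityRatio μ μ' v x ^ lam ∂(gaussianReal μ v) :=
        lintegral_congr_ae <|
          (rnDeriv_gaussianReal_ae_eq hv μ μ').mono fun _ hx ↦ congrArg (· ^ lam) hx
    _ = ∫⁻ x, gaussianPDF μ v x * gaussianDensityRatio μ μ' v x ^ lam := by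
        rw [gaussianReal_of_var_ne_zero μ hv, lintegral_withDensity_eq_lintegral_mul _
          (measurable_gaussianPDF μ v) ((measurable_gaussianDensityRatio μ μ' v).pow_const lam)]
        rfl
    _ = ENNReal.ofReal (exp (lam * (lam + 1) * (μ - μ') ^ 2 / (2 * v))) := by
        simp_rw [gaussianPDF_mul_gaussianDensityRatio_rpow hv]
        rw [lintegral_const_mul _ (measurable_gaussianPDF _ v), lintegral_gaussianPDF_eq_one _ hv,
          mul_one]

end ProbabilityTheory

/-- Exact λ-th moment of the one-dimensional Gaussian mechanism:
for `μ = N(m, σ²)` and `ν = N(m', σ²)` with `σ > 0`, `μ ≪ ν` and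
`∫ (dμ/dν)^λ dμ = exp(λ(λ+1)(m-m')²/(2σ²))` for all `λ > 0`. -/
theorem gaussian_moment_eq
    (m m' σ : ℝ) (hσ : 0 < σ) :
    gaussianReal m ((σ ^ 2).toNNReal) ≪ gaussianReal m' ((σ ^ 2).toNNReal) ∧
      ∀ lam : ℝ, 0 < lam →
        ∫⁻ x, ((gaussianReal m ((σ ^ 2).toNNReal)).rnDeriv
            (gaussianReal m' ((σ ^ 2).toNNReal)) x) ^ lam
          ∂(gaussianReal m ((σ ^ 2).toNNReal))
        = ENNReal.ofReal (Real.exp (lam * (lam + 1) * (m - m') ^ 2 / (2 * σ ^ 2))) := by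
  have hσ2 : 0 < σ ^ 2 := by positivity
  have hv : (σ ^ 2).toNNReal ≠ 0 := (Real.toNNReal_pos.mpr hσ2).ne'
  refine ⟨gaussianReal_absolutelyContinuous_gaussianReal hv m m', fun lam _ ↦ ?_⟩
  rw [lintegral_rnDeriv_rpow_gaussianReal hv, Real.coe_toNNReal _ hσ2.le]
end
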